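/- For every n ≥ 0 and every factor u of W_n: if p is the least period of u and |u| ≥ 2p, then |u| = 2p. Equivalently, every run (maximal periodic factor of exponent at least 2) in the ZWW word is a square. -/

import Mathlib

/-- The morphism `phi` on the alphabet `ℕ`: `phi (2i) = (2i)(2i+1)` and `phi (2i+1) = (2i+2)`. -/
def phi (a : ℕ) : List ℕ := if a % 2 = 0 then [a, a + 1] else [a + 1]

/-- The finite ZWW words: `W n = phi^n(0)`, so `W 0 = 0`, `W 1 = 01`, `W 2 = 012`, `W 3 = 01223`. -/
def W (n : ℕ) : List ℕ := (fun w => w.flatMap phi)^[n] [0]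

/-- A word `u` has period `p ≥ 1` if `u[j] = u[j+p]` whenever both positions lie in `u`. -/
def HasPeriod (u : List ℕ) (p : ℕ) : Prop :=
  1 ≤ p ∧ ∀ j : ℕ, j + p < u.length → u[j]? = u[j + p]?

/-!
A factor with period `p` and length greater than `2p` begins with a square `x x` followed by the
first letter `x₀` of `x`, so it suffices that no ZWW word contains a square `x x` followed by a
letter `d ≤ x₀`. In `φ(w)` every odd letter `a` is preceded by `a - 1` and every even letter starts
a `φ`-block; moreover consecutive letters of `W n` increase by at most one. The first fact shifts a
square with odd `x₀` one step left, the third excludes an odd `d` after an even `x₀`, and when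
`x₀` and `d` are both even the square and `d` are cut along blocks, so desubstituting gives,
up to one more shift, the same forbidden pattern in `W (n - 1)`.
-/

lemma phi_of_even {a : ℕ} (h : a % 2 = 0) : phi a = [a, a + 1] := if_pos h

lemma phi_of_odd {a : ℕ} (h : a % 2 = 1) : phi a = [a + 1] := if_neg (by omega)

lemma phi_eq_cons (a : ℕ) : ∃ t, phi a = (a + a % 2) :: t := by
  rcases Nat.mod_two_eq_zero_or_one a with h | h
  · exact ⟨[a + 1], by simp [phi_of_even h, h]⟩
  · exact ⟨[], by rw [phi_of_odd h, h]⟩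

lemma phi_eq_append_cons {a b : ℕ} {A C : List ℕ} (h : phi a = A ++ b :: C) :
    (A = [] ∧ b % 2 = 0) ∨ (A = [b - 1] ∧ b % 2 = 1) := by
  rcases Nat.mod_two_eq_zero_or_one a with ha | ha
  · rw [phi_of_even ha] at h
    match A, h with
    | [], h =>
      obtain ⟨rfl, -⟩ := List.cons.inj h
      exact Or.inl ⟨rfl, ha⟩
    | [_], h =>
      obtain ⟨rfl, rfl, -⟩ : _ ∧ a + 1 = b ∧ _ := by simpa using h
      exact Or.inr ⟨by simp, by omega⟩
    | _ :: _ :: _, h => simp at h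
  · rw [phi_of_odd ha] at h
    match A, h with
    | [], h =>
      obtain ⟨rfl, -⟩ := List.cons.inj h
      exact Or.inl ⟨rfl, by omega⟩
    | _ :: _, h => simp at h

lemma flatMap_phi_eq_append_cons_of_odd {w A C : List ℕ} {a : ℕ} (ha : a % 2 = 1)
    (h : w.flatMap phi = A ++ a :: C) : ∃ A', A = A' ++ [a - 1] := by
  induction w generalizing A with
  | nil => simp at h
  | cons c w ih =>
    rw [List.flatMap_cons, List.append_eq_append_iff] at h
    rcases h with ⟨A', rfl, h⟩ | ⟨B, hc, hB⟩
    · obtain ⟨A'', rfl⟩ := ih h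
      exact ⟨phi c ++ A'', by simp⟩
    · rcases B with _ | ⟨a', B⟩
      · obtain ⟨A', hA'⟩ := ih (A := []) hB.symm
        simp at hA'
      · obtain ⟨rfl, -⟩ := List.cons.inj hB
        rcases phi_eq_append_cons hc with ⟨-, h⟩ | ⟨rfl, -⟩
        · omega
        · exact ⟨[], rfl⟩

lemma flatMap_phi_eq_append_cons_of_even {w A C : List ℕ} {b : ℕ} (hb : b % 2 = 0)
    (h : w.flatMap phi = A ++ b :: C) :
    ∃ w₁ w₂, w = w₁ ++ w₂ ∧ w₁.flatMap phi = A ∧ w₂.flatMap phi = b :: C := by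
  induction w generalizing A with
  | nil => simp at h
  | cons c w ih =>
    rw [List.flatMap_cons, List.append_eq_append_iff] at h
    rcases h with ⟨A', rfl, h⟩ | ⟨B, hc, hB⟩
    · obtain ⟨w₁, w₂, rfl, rfl, h₂⟩ := ih h
      exact ⟨c :: w₁, w₂, rfl, by simp, h₂⟩
    · rcases B with _ | ⟨b', B⟩
      · exact ⟨[c], w, rfl, by simpa using hc, hB.symm⟩
      · obtain ⟨rfl, -⟩ := List.cons.inj hB
        rcases phi_eq_append_cons hc with ⟨rfl, -⟩ | ⟨-, h⟩
        · exact ⟨[], c :: w, rfl, rfl, by rw [List.flatMap_cons, hc, hB]; rfl⟩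
        · omega

lemma flatMap_phi_injective : Function.Injective (List.flatMap phi) := by
  intro u
  induction u with
  | nil =>
    rintro (_ | ⟨b, v⟩) h
    · rfl
    · obtain ⟨t, ht⟩ := phi_eq_cons b
      simp [ht] at h
  | cons a u ih =>
    rintro (_ | ⟨b, v⟩) h
    · obtain ⟨t, ht⟩ := phi_eq_cons a
      simp [ht] at h
    simp only [List.flatMap_cons] at h
    suffices hab : a = b by
      subst hab
      rw [ih (List.append_cancel_left h)]
    have not_odd_head {c : ℕ} {C D : List ℕ} (hc : c % 2 = 1) (h : C.flatMap phi = c :: D) :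
        False := by
      obtain ⟨A, hA⟩ := flatMap_phi_eq_append_cons_of_odd (A := []) hc h
      simp at hA
    rcases Nat.mod_two_eq_zero_or_one a with ha | ha <;>
      rcases Nat.mod_two_eq_zero_or_one b with hb | hb <;>
      simp only [phi_of_even, phi_of_odd, ha, hb, List.cons_append, List.nil_append,
        List.cons.injEq] at h
    · exact h.1
    · exact (not_odd_head (by omega) h.2.symm).elim
    · exact (not_odd_head (by omega) h.2).elim
    · omega

lemma W_succ (n : ℕ) : W (n + 1) = (W n).flatMap phi :=
  Function.iterate_succ_apply' _ _ _

lemma W_eq_append_cons_of_odd {n a : ℕ} {A C : List ℕ} (ha : a % 2 = 1)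
    (h : W n = A ++ a :: C) : ∃ A', A = A' ++ [a - 1] := by
  cases n with
  | zero =>
    rcases A with _ | ⟨_, _⟩
    · obtain ⟨rfl, -⟩ := List.cons.inj h
      omega
    · simp [W] at h
  | succ n => exact flatMap_phi_eq_append_cons_of_odd ha (W_succ n ▸ h)

lemma isChain_flatMap_phi {w : List ℕ} (hw : w.IsChain (fun a b => b ≤ a + 1)) :
    (w.flatMap phi).IsChain (fun a b => b ≤ a + 1) := by
  rw [List.flatMap_def, List.isChain_flatten (by simp [phi]; grind), List.isChain_map]
  refine ⟨?_, hw.imp fun a b hab => ?_⟩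
  · simp only [List.mem_map]
    rintro _ ⟨a, -, rfl⟩
    unfold phi
    split_ifs <;> simp
  · unfold phi
    split_ifs <;> simp <;> omega

lemma W_isChain (n : ℕ) : (W n).IsChain (fun a b => b ≤ a + 1) := by
  induction n with
  | zero => exact List.isChain_singleton 0
  | succ n ih => exact W_succ n ▸ isChain_flatMap_phi ih

lemma exists_eq_append_singleton_of_append_eq {α : Type*} {l r s : List α} {c : α}
    (h : l ++ r = s ++ [c]) (hr : r ≠ []) : ∃ r', r = r' ++ [c] := by
  obtain ⟨r', c', rfl⟩ := (List.eq_nil_or_concat' r).resolve_left hr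
  rw [← List.append_assoc] at h
  obtain ⟨-, hc⟩ := List.append_inj' h rfl
  exact ⟨r', by rw [List.singleton_inj.1 hc]⟩

lemma exists_square_append_infix_of_odd {n a : ℕ} {x : List ℕ} (ha : a % 2 = 1)
    (h : (a :: x) ++ (a :: x) <:+: W n) :
    ∃ y, ((a - 1) :: y) ++ ((a - 1) :: y) ++ [a - 1] <:+: W n := by
  obtain ⟨P, S, hW⟩ := h
  obtain ⟨P', rfl⟩ := W_eq_append_cons_of_odd ha (A := P) (C := x ++ (a :: x) ++ S)
    (by rw [← hW]; simp)
  obtain ⟨Q, hQ⟩ := W_eq_append_cons_of_odd ha (A := P' ++ [a - 1] ++ (a :: x)) (C := x ++ S)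
    (by rw [← hW]; simp)
  obtain ⟨y, hy⟩ := exists_eq_append_singleton_of_append_eq hQ (List.cons_ne_nil a x)
  exact ⟨y, P', S, by rw [← hW, hy]; simp⟩

lemma exists_even_square_append_infix {n a d : ℕ} {x : List ℕ} (hd : d ≤ a)
    (h : (a :: x) ++ (a :: x) ++ [d] <:+: W n) :
    ∃ b y e, b % 2 = 0 ∧ e % 2 = 0 ∧ e ≤ b ∧ (b :: y) ++ (b :: y) ++ [e] <:+: W n := by
  rcases Nat.mod_two_eq_zero_or_one a with ha | ha
  · rcases Nat.mod_two_eq_zero_or_one d with hd' | hd'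
    · exact ⟨a, x, d, ha, hd', hd, h⟩
    obtain ⟨P, S, hW⟩ := h
    obtain ⟨Q, hQ⟩ := W_eq_append_cons_of_odd hd' (A := P ++ (a :: x) ++ (a :: x)) (C := S)
      (by rw [← hW]; simp)
    obtain ⟨y, hy⟩ := exists_eq_append_singleton_of_append_eq hQ (List.cons_ne_nil a x)
    -- the odd `d` forces `x` to end in `d - 1`, which in the first copy is followed by `a`
    have hstep : [d - 1, a] <:+: W n :=
      ⟨P ++ y, x ++ [d] ++ S, by rw [← hW]; nth_rw 1 [hy]; simp⟩
    have := List.isChain_pair.1 ((W_isChain n).infix hstep)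
    omega
  · obtain ⟨y, hy⟩ := exists_square_append_infix_of_odd ha ((List.infix_append [] _ _).trans h)
    exact ⟨a - 1, y, a - 1, by omega, by omega, le_rfl, hy⟩

lemma exists_square_append_infix_W_of_succ {m b e : ℕ} {y : List ℕ} (hb : b % 2 = 0)
    (he : e % 2 = 0) (h : (b :: y) ++ (b :: y) ++ [e] <:+: W (m + 1)) :
    ∃ c z f, c + c % 2 = b ∧ f + f % 2 = e ∧ (c :: z) ++ (c :: z) ++ [f] <:+: W m := by
  obtain ⟨P, S, hW⟩ := h
  rw [W_succ] at hW
  obtain ⟨w₁, w₂, hWm, rfl, h₂⟩ := flatMap_phi_eq_append_cons_of_even hb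
    (A := P) (C := y ++ (b :: y) ++ e :: S) (by rw [← hW]; simp)
  obtain ⟨w₃, w₄, rfl, h₃, h₄⟩ := flatMap_phi_eq_append_cons_of_even hb
    (A := b :: y) (C := y ++ e :: S) (by rw [h₂]; simp)
  obtain ⟨w₅, w₆, rfl, h₅, h₆⟩ := flatMap_phi_eq_append_cons_of_even he
    (A := b :: y) (C := S) (by rw [h₄]; simp)
  obtain rfl := flatMap_phi_injective (h₃.trans h₅.symm)
  obtain ⟨c, z, rfl⟩ := List.exists_cons_of_ne_nil (l := w₃) (by rintro rfl; simp at h₃)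
  obtain ⟨f, t, rfl⟩ := List.exists_cons_of_ne_nil (l := w₆) (by rintro rfl; simp at h₆)
  obtain ⟨tc, htc⟩ := phi_eq_cons c
  obtain ⟨tf, htf⟩ := phi_eq_cons f
  rw [List.flatMap_cons, htc] at h₃
  rw [List.flatMap_cons, htf] at h₆
  exact ⟨c, z, f, (List.cons.inj h₃).1, (List.cons.inj h₆).1, w₁, t, by rw [hWm]; simp⟩

theorem not_square_append_infix_W (n : ℕ) :
    ∀ a x d, d ≤ a → ¬ (a :: x) ++ (a :: x) ++ [d] <:+: W n := by
  induction n with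
  | zero =>
    intro a x d _ h
    have := h.length_le
    simp [W] at this
  | succ m ih =>
    intro a x d hd h
    obtain ⟨b, y, e, hb, he, heb, hsq⟩ := exists_even_square_append_infix hd h
    obtain ⟨c, z, f, rfl, rfl, hsq'⟩ := exists_square_append_infix_W_of_succ hb he hsq
    rcases Nat.mod_two_eq_zero_or_one c with hc | hc
    · exact ih c z f (by omega) hsq'
    · obtain ⟨y, hy⟩ :=
        exists_square_append_infix_of_odd hc ((List.infix_append [] _ _).trans hsq')
      exact ih _ y _ le_rfl hy

lemma HasPeriod.exists_square_append_prefix {u : List ℕ} {p : ℕ} (hp : HasPeriod u p)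
    (hlen : 2 * p < u.length) : ∃ a x, (a :: x) ++ (a :: x) ++ [a] <+: u := by
  obtain ⟨hp1, hper⟩ := hp
  have hdrop : u.drop p <+: u := by
    refine List.prefix_iff_getElem?.2 fun i hi => ?_
    rw [List.getElem_drop, hper i (by simp at hi; omega), Nat.add_comm]
    exact List.getElem?_eq_getElem _
  obtain ⟨a, x, hx⟩ := List.exists_cons_of_ne_nil (l := u.take p)
    (List.ne_nil_of_length_pos (by simp; omega))
  have hxp : x.length + 1 = p := by
    have := congrArg List.length hx
    simp at this
    omega
  have hu : u = (a :: x) ++ u.drop p := by rw [← hx, List.take_append_drop]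
  obtain ⟨v, hv⟩ : (a :: x) <+: u.drop p :=
    hx ▸ List.prefix_of_prefix_length_le (List.take_prefix p u) hdrop (by simp; omega)
  rw [← hv] at hu hdrop
  rw [hu, List.prefix_append_right_inj] at hdrop
  obtain ⟨g, v', rfl⟩ := List.exists_cons_of_ne_nil (l := v)
    (by rintro rfl; have := congrArg List.length hu; simp at this; omega)
  rw [List.cons_append, List.cons_prefix_cons] at hdrop
  exact ⟨a, x, v', by rw [hu, hdrop.1]; simp⟩

/-- For every factor `u` of a ZWW word: if `p` is the least period of `u` and
`|u| ≥ 2p`, then `|u| = 2p` (equivalently, every run in the ZWW word is a square). -/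
theorem zww_runs_are_squares : ∀ n : ℕ, ∀ u : List ℕ, u <:+: W n →
    ∀ p : ℕ, HasPeriod u p → (∀ q : ℕ, HasPeriod u q → p ≤ q) →
    2 * p ≤ u.length → u.length = 2 * p := by
  intro n u hu p hp _ hle
  by_contra hne
  obtain ⟨a, x, hax⟩ := hp.exists_square_append_prefix (by omega)
  exact not_square_append_infix_W n a x a le_rfl (hax.isInfix.trans hu)
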